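/- The set Z(dG_DK) of common zeros in P²(k) of the three partial derivatives of the Dolgachev–Kondō polynomial G_DK := XYZ(X³+Y³+Z³) is exactly the set P²(F₄) of F₄-rational points of P²(k), i.e. the 21 points admitting homogeneous coordinates all lying in F₄. -/

import Mathlib

open MvPolynomial

/-- The Dolgachev–Kondō polynomial `G_DK = XYZ(X³+Y³+Z³)`. -/
noncomputable def GDK (k : Type*) [CommRing k] : MvPolynomial (Fin 3) k :=
  X 0 * X 1 * X 2 * (X 0 ^ 3 + X 1 ^ 3 + X 2 ^ 3)

/-- The set `P²(F₄)` of points of `P²(k)` admitting homogeneous coordinates all lying in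
the four-element subfield `F₄ = {0, 1, ω, ω+1}` of `k`. -/
def P2F4 (k : Type*) [Field k] (ω : k) : Set (Projectivization k (Fin 3 → k)) :=
  {P | ∃ v : Fin 3 → k, (∀ i, v i ∈ ({0, 1, ω, ω + 1} : Set k)) ∧
    ∃ hv : v ≠ 0, P = Projectivization.mk k v hv}

/-!
In characteristic 2 one has `∂G/∂X = Y⁴Z + YZ⁴`, and symmetrically for `Y` and `Z`, so `dG`
vanishes at `[v]` exactly when `v_i⁴ v_j = v_i v_j⁴` for all `i, j`, i.e. when the vector `(v_i⁴)`
is proportional to `v`: the point is fixed by the Frobenius `x ↦ x⁴`. Scaling a nonzero coordinate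
to `1` shows that these are the points with coordinates in the fixed field
`{x | x⁴ = x} = {0, 1, ω, ω + 1} = F₄`, and `P²(F₄)` has `1 + 4 + 4² = 21` points.
-/

open Function Projectivization
open scoped LinearAlgebra.Projectivization

section FrobeniusFixed

variable {K ι : Type*}

/-- The 2×2 minors of the matrix with rows `v` and `v ^ q` vanish: when `v ≠ 0` this says that
the point `[v]` is fixed by the `q`-power Frobenius. -/
def IsFrobeniusFixed [CommMonoid K] (q : ℕ) (v : ι → K) : Prop :=
  ∀ i j, v i ^ q * v j = v i * v j ^ q

lemma IsFrobeniusFixed.smul [CommMonoid K] {q : ℕ} {v : ι → K} (h : IsFrobeniusFixed q v)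
    (c : K) : IsFrobeniusFixed q (c • v) := fun i j => by
  simp only [Pi.smul_apply, smul_eq_mul, mul_pow]
  calc c ^ q * v i ^ q * (c * v j) = c ^ q * c * (v i ^ q * v j) := by ac_rfl
    _ = c ^ q * c * (v i * v j ^ q) := by rw [h i j]
    _ = c * v i * (c ^ q * v j ^ q) := by ac_rfl

lemma isFrobeniusFixed_of_forall_pow_eq [CommMonoid K] {q : ℕ} {v : ι → K}
    (h : ∀ i, v i ^ q = v i) : IsFrobeniusFixed q v := fun i j => by
  rw [h i, h j]

lemma isFrobeniusFixed_fin_three_iff [CommMonoid K] {q : ℕ} {v : Fin 3 → K} :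
    IsFrobeniusFixed q v ↔ v 1 ^ q * v 2 = v 1 * v 2 ^ q ∧ v 0 ^ q * v 2 = v 0 * v 2 ^ q ∧
      v 0 ^ q * v 1 = v 0 * v 1 ^ q := by
  refine ⟨fun h => ⟨h 1 2, h 0 2, h 0 1⟩, fun ⟨h12, h02, h01⟩ i j => ?_⟩
  fin_cases i <;> fin_cases j <;> grind

variable [Field K]

lemma IsFrobeniusFixed.inv_mul_pow_eq {q : ℕ} {v : ι → K} (h : IsFrobeniusFixed q v) {j : ι}
    (hj : v j ≠ 0) (i : ι) : ((v j)⁻¹ * v i) ^ q = (v j)⁻¹ * v i := by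
  rw [mul_pow, inv_pow]
  field_simp
  linear_combination h i j

theorem isFrobeniusFixed_rep_iff {q : ℕ} (P : ℙ K (ι → K)) :
    IsFrobeniusFixed q P.rep ↔
      ∃ v : ι → K, (∀ i, v i ^ q = v i) ∧ ∃ hv : v ≠ 0, P = mk K v hv := by
  constructor
  · intro h
    obtain ⟨j, hj⟩ := Function.ne_iff.mp P.rep_nonzero
    refine ⟨(P.rep j)⁻¹ • P.rep, h.inv_mul_pow_eq hj, smul_ne_zero (inv_ne_zero hj) P.rep_nonzero,
      ?_⟩
    conv_lhs => rw [← P.mk_rep]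
    exact (mk_eq_mk_iff' K _ _ _ _).mpr ⟨P.rep j, by rw [smul_inv_smul₀ hj]⟩
  · rintro ⟨v, hv_pow, hv, rfl⟩
    obtain ⟨a, ha⟩ := exists_smul_eq_mk_rep K v hv
    rw [← ha]
    exact (isFrobeniusFixed_of_forall_pow_eq hv_pow).smul _

end FrobeniusFixed

def frobeniusFixedField (K : Type*) [Field K] (p n : ℕ) [ExpChar K p] : Subfield K :=
  RingHom.eqLocusField (iterateFrobenius K p n) (RingHom.id K)

lemma mem_frobeniusFixedField {K : Type*} [Field K] {p n : ℕ} [ExpChar K p] {x : K} :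
    x ∈ frobeniusFixedField K p n ↔ x ^ p ^ n = x :=
  Iff.rfl

section RationalPoints

variable {K L : Type*} [Field K] [Field L]

def rationalPoints (F : Subfield K) (ι : Type*) : Set (ℙ K (ι → K)) :=
  {P | ∃ v : ι → K, (∀ i, v i ∈ F) ∧ ∃ hv : v ≠ 0, P = mk K v hv}

def RingHom.compLeftₛₗ (σ : K →+* L) (ι : Type*) : (ι → K) →ₛₗ[σ] (ι → L) where
  toFun v := σ ∘ v
  map_add' _ _ := funext fun _ => map_add σ _ _
  map_smul' _ _ := funext fun _ => map_mul σ _ _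

variable {ι : Type*}

lemma RingHom.compLeftₛₗ_injective (σ : K →+* L) : Injective (σ.compLeftₛₗ ι) :=
  σ.injective.comp_left

theorem Projectivization.map_compLeftₛₗ_injective (σ : K →+* L) :
    Injective (map (σ.compLeftₛₗ ι) σ.compLeftₛₗ_injective) := by
  intro P Q hPQ
  induction P using Projectivization.ind with | h v hv =>
  induction Q using Projectivization.ind with | h w hw =>
  rw [map_mk, map_mk, mk_eq_mk_iff'] at hPQ
  obtain ⟨a, ha⟩ := hPQ
  obtain ⟨j, hj⟩ := Function.ne_iff.mp hw
  have hσj : σ (w j) ≠ 0 := (map_ne_zero σ).mpr hj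
  refine (mk_eq_mk_iff' K _ _ _ _).mpr ⟨v j / w j, funext fun i => σ.injective ?_⟩
  have hi : a * σ (w i) = σ (v i) := congrFun ha i
  have hj' : a * σ (w j) = σ (v j) := congrFun ha j
  rw [Pi.smul_apply, smul_eq_mul, map_mul, map_div₀, ← hi, ← hj']
  field_simp

theorem range_map_subtype_compLeftₛₗ (F : Subfield K) :
    Set.range (map (F.subtype.compLeftₛₗ ι) F.subtype.compLeftₛₗ_injective) =
      rationalPoints F ι := by
  ext P
  constructor
  · rintro ⟨Q, rfl⟩
    induction Q using Projectivization.ind with | h u hu =>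
    exact ⟨_, fun i => (u i).2, _, map_mk _ _ _ _⟩
  · rintro ⟨v, hvF, hv, rfl⟩
    refine ⟨mk F (fun i => ⟨v i, hvF i⟩) ?_, map_mk _ _ _ _⟩
    contrapose! hv
    exact funext fun i => congrArg Subtype.val (congrFun hv i)

theorem ncard_rationalPoints [Fintype ι] (F : Subfield K) [Finite F] :
    (rationalPoints F ι).ncard = ∑ i ∈ Finset.range (Fintype.card ι), Nat.card F ^ i := by
  rw [← range_map_subtype_compLeftₛₗ, Set.ncard_range_of_injective (map_compLeftₛₗ_injective _),
    card_of_finrank F _ (Module.finrank_fintype_fun_eq_card F)]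

theorem setOf_isFrobeniusFixed_rep {p n : ℕ} [ExpChar K p] :
    {P : ℙ K (ι → K) | IsFrobeniusFixed (p ^ n) P.rep} =
      rationalPoints (frobeniusFixedField K p n) ι := by
  ext P
  simp only [Set.mem_ofPred_eq, isFrobeniusFixed_rep_iff, rationalPoints, mem_frobeniusFixedField]

end RationalPoints

section CharTwo

variable {k : Type*} [Field k] [CharP k 2] {ω : k}

lemma pow_four_eq_self_iff (hω : ω ^ 2 + ω + 1 = 0) (a : k) :
    a ^ 4 = a ↔ a ∈ ({0, 1, ω, ω + 1} : Set k) := by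
  have h2 : (2 : k) = 0 := CharTwo.two_eq_zero
  have hfactor : a ^ 4 - a = a * (a - 1) * (a - ω) * (a - (ω + 1)) := by
    linear_combination ((ω + 1) * a ^ 3 - ω * a ^ 2 - a) * h2 + (a - a ^ 2) * hω
  rw [← sub_eq_zero, hfactor]
  simp only [mul_eq_zero, sub_eq_zero, Set.mem_insert_iff, Set.mem_singleton_iff, or_assoc]

lemma eval_pderiv_GDK (v : Fin 3 → k) :
    eval v (pderiv 0 (GDK k)) = v 1 ^ 4 * v 2 + v 1 * v 2 ^ 4 ∧
    eval v (pderiv 1 (GDK k)) = v 0 ^ 4 * v 2 + v 0 * v 2 ^ 4 ∧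
    eval v (pderiv 2 (GDK k)) = v 0 ^ 4 * v 1 + v 0 * v 1 ^ 4 := by
  have h2 : (2 : k) = 0 := CharTwo.two_eq_zero
  refine ⟨?_, ?_, ?_⟩ <;>
    simp only [GDK, Derivation.leibniz, Derivation.leibniz_pow, map_add, map_mul, map_pow,
      pderiv_X, Pi.single_apply, smul_eq_mul, nsmul_eq_mul, eval_X, map_natCast, map_one, map_zero,
      Fin.reduceEq, if_true, if_false]
  · linear_combination 2 * v 0 ^ 3 * v 1 * v 2 * h2
  · linear_combination 2 * v 0 * v 1 ^ 3 * v 2 * h2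
  · linear_combination 2 * v 0 * v 1 * v 2 ^ 3 * h2

lemma forall_eval_pderiv_GDK_eq_zero_iff (v : Fin 3 → k) :
    (∀ i, eval v (pderiv i (GDK k)) = 0) ↔ IsFrobeniusFixed 4 v := by
  obtain ⟨h0, h1, h2⟩ := eval_pderiv_GDK v
  rw [Fin.forall_fin_succ, Fin.forall_fin_succ, Fin.forall_fin_one, isFrobeniusFixed_fin_three_iff]
  simp only [h0, h1, h2, CharTwo.add_eq_zero, Fin.succ_zero_eq_one, Fin.succ_one_eq_two]

lemma coe_frobeniusFixedField_two_two (hω : ω ^ 2 + ω + 1 = 0) :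
    (frobeniusFixedField k 2 2 : Set k) = {0, 1, ω, ω + 1} :=
  Set.ext (pow_four_eq_self_iff hω)

lemma P2F4_eq_rationalPoints (hω : ω ^ 2 + ω + 1 = 0) :
    P2F4 k ω = rationalPoints (frobeniusFixedField k 2 2) (Fin 3) := by
  simp only [P2F4, rationalPoints, ← SetLike.mem_coe, coe_frobeniusFixedField_two_two hω]

lemma card_frobeniusFixedField_two_two (hω : ω ^ 2 + ω + 1 = 0) :
    Nat.card (frobeniusFixedField k 2 2) = 4 := by
  have h2 : (2 : k) = 0 := CharTwo.two_eq_zero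
  have hω0 : ω ≠ 0 := fun h => one_ne_zero (by linear_combination hω - (ω + 1) * h)
  have hω1 : ω ≠ 1 := fun h => one_ne_zero (by linear_combination hω - h2 - (ω + 2) * h)
  have hω1' : ω + 1 ≠ 0 := fun h => one_ne_zero (by linear_combination hω - ω * h)
  rw [← SetLike.coe_sort_coe, Nat.card_coe_set_eq, coe_frobeniusFixedField_two_two hω,
    Set.ncard_insert_of_notMem, Set.ncard_insert_of_notMem, Set.ncard_pair] <;>
    simp [hω0, hω1.symm, hω0.symm, hω1'.symm]

end CharTwo

theorem zero_set_dGDK_general (k : Type*) [Field k] [CharP k 2]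
    (ω : k) (hω : ω ^ 2 + ω + 1 = 0) :
    {P : Projectivization k (Fin 3 → k) |
        ∀ i : Fin 3, eval P.rep (pderiv i (GDK k)) = 0} = P2F4 k ω ∧
      (P2F4 k ω).ncard = 21 := by
  rw [P2F4_eq_rationalPoints hω]
  refine ⟨?_, ?_⟩
  · rw [← setOf_isFrobeniusFixed_rep]
    exact Set.ext fun P => forall_eval_pderiv_GDK_eq_zero_iff P.rep
  · have hcard := card_frobeniusFixedField_two_two hω
    have : Finite (frobeniusFixedField k 2 2) := Nat.finite_of_card_ne_zero (by simp [hcard])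
    rw [ncard_rationalPoints, hcard]
    rfl

/-- the common zero set in `P²(k)` of the three partial derivatives of the
Dolgachev–Kondō polynomial `G_DK` is exactly the 21-point set `P²(F₄)` of `F₄`-rational
points of the projective plane. -/
theorem zero_set_dGDK (k : Type*) [Field k] [IsAlgClosed k] [CharP k 2]
    (ω : k) (hω : ω ^ 2 + ω + 1 = 0) :
    {P : Projectivization k (Fin 3 → k) |
        ∀ i : Fin 3, eval P.rep (pderiv i (GDK k)) = 0} = P2F4 k ω ∧
      (P2F4 k ω).ncard = 21 :=
  zero_set_dGDK_general k ω hω
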